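/- Suppose a line of traps executes from an initial configuration C_l and no agents arrive at its entrance gate during the execution. Then the line eventually reaches a silent configuration C̄_l, and the inner vector β(C̄_l) = (β_{3m}(C̄_l),...,β_1(C̄_l)), the gate vector γ(C̄_l) = (γ_{3m}(C̄_l),...,γ_1(C̄_l)), and the number s(C_l) of agents released by the line to state X before reaching C̄_l depend solely on C_l — they are the same for every sequence of interactions chosen by the scheduler. Explicitly, with y_a = x_a + γ_a(C_l) and x_{3m} = 0: if β_a(C_l)+⌊y_a/2⌋ ≤ m then β_a(C̄_l) = β_a(C_l)+⌊y_a/2⌋, γ_a(C̄_l) = y_a - 2⌊y_a/2⌋ and x_{a-1} = ⌊y_a/2⌋; otherwise β_a(C̄_l) = m, γ_a(C̄_l) = 1 and x_{a-1} = β_a(C_l)+y_a-m-1; and s(C_l) = x_0. -/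

import Mathlib

open Classical Finset

/-- An ordered pair of distinct agents (initiator, responder) chosen by the scheduler. -/
abbrev SchedPair (n : ℕ) : Type := {p : Fin n × Fin n // p.1 ≠ p.2}

/-- One interaction step: the scheduler selects the ordered pair `p` of distinct agents
(initiator `p.1.1`, responder `p.1.2`) and they update their states via the
transition function `δ`. -/
def pstep {S : Type} {n : ℕ} (δ : S → S → S × S) (c : Fin n → S) (p : SchedPair n) :
    Fin n → S := fun a =>
  if a = p.1.1 then (δ (c p.1.1) (c p.1.2)).1
  else if a = p.1.2 then (δ (c p.1.1) (c p.1.2)).2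
  else c a

/-- The configuration after the first `t` interactions of the finite schedule `σ`. -/
def configAt {S : Type} {n T : ℕ} (δ : S → S → S × S) (c0 : Fin n → S)
    (σ : Fin T → SchedPair n) (t : ℕ) : Fin n → S :=
  ((List.ofFn σ).take t).foldl (pstep δ) c0

/-- Probability of the event `E` under the uniform random scheduler running for
`T` interactions (interactions are drawn independently and uniformly at random). -/
noncomputable def schedPr {n : ℕ} (T : ℕ) (E : (Fin T → SchedPair n) → Prop) : ℝ :=
  (((Finset.univ : Finset (Fin T → SchedPair n)).filter fun σ => E σ).card : ℝ) /
    ((Finset.univ : Finset (Fin T → SchedPair n)).card : ℝ)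

/-- The infinite trajectory generated by the schedule `σ` from configuration `c0`. -/
def ptraj {S : Type} {n : ℕ} (δ : S → S → S × S) (c0 : Fin n → S)
    (σ : ℕ → SchedPair n) : ℕ → Fin n → S
  | 0 => c0
  | t + 1 => pstep δ (ptraj δ c0 σ t) (σ t)

/-- States of a line of traps: `3m` traps of size `m+1`, with states
`(a, b)` for `a ∈ [1,3m]` (represented by `Fin (3*m)`, the index `a` standing for
trap `a+1`; index `0` is trap `1`, whose gate is the exit gate, and index `3m-1` is
trap `3m`, whose gate is the entrance gate) and `b ∈ [0,m]` (`b = 0` being the gate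
state), plus the extra state `X` (represented by `Sum.inr ()`). -/
abbrev LineSt (m : ℕ) : Type := (Fin (3 * m) × Fin (m + 1)) ⊕ Unit

/-- Transition function of a line of traps (with `X` as an inert sink, so no agents
arrive at the entrance gate):
`(a,b)+(a,b) → (a,b)+(a,b-1)` for `b > 0`;
`(a,0)+(a,0) → (a,m)+(a-1,0)` for `a > 1`;
`(1,0)+(1,0) → (1,m)+X`. -/
def lineDelta (m : ℕ) : LineSt m → LineSt m → LineSt m × LineSt m := fun s t =>
  match s, t with
  | Sum.inl p, Sum.inl q =>
    if p = q then
      if (p.2 : ℕ) ≠ 0 then (Sum.inl p, Sum.inl (p.1, p.2 - 1))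
      else if (p.1 : ℕ) ≠ 0 then
        (Sum.inl (p.1, Fin.last m),
          Sum.inl (⟨(p.1 : ℕ) - 1, by have := p.1.isLt; omega⟩, 0))
      else (Sum.inl (p.1, Fin.last m), Sum.inr ())
    else (s, t)
  | _, _ => (s, t)

/-- A line of traps in which agents may also enter through the entrance gate
(agents in the extra state `X` are inserted at the entrance gate `(3m, 0)` when two
of them meet). -/
def lineArrDelta (m : ℕ) : LineSt m → LineSt m → LineSt m × LineSt m := fun s t =>
  match s, t with
  | Sum.inr _, Sum.inr _ =>
    if hm : 0 < m then (Sum.inr (), Sum.inl (⟨3 * m - 1, by omega⟩, 0)) else (s, t)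
  | _, _ => lineDelta m s t

/-- `betaOf c a` : the number of agents occupying the inner states of trap `a`
(`a ∈ [1, 3m]`, 1-based). -/
noncomputable def betaOf {m N : ℕ} (c : Fin N → LineSt m) (a : ℕ) : ℕ :=
  ((Finset.univ : Finset (Fin N)).filter fun i =>
    ∃ p : Fin (3 * m) × Fin (m + 1),
      c i = Sum.inl p ∧ (p.1 : ℕ) = a - 1 ∧ 1 ≤ a ∧ (p.2 : ℕ) ≠ 0).card

/-- `gammaOf c a` : the number of agents occupying the gate state of trap `a`
(`a ∈ [1, 3m]`, 1-based). -/
noncomputable def gammaOf {m N : ℕ} (c : Fin N → LineSt m) (a : ℕ) : ℕ :=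
  ((Finset.univ : Finset (Fin N)).filter fun i =>
    ∃ p : Fin (3 * m) × Fin (m + 1),
      c i = Sum.inl p ∧ (p.1 : ℕ) = a - 1 ∧ 1 ≤ a ∧ (p.2 : ℕ) = 0).card

/-- Number of agents in the extra state `X`. -/
noncomputable def xCount {m N : ℕ} (c : Fin N → LineSt m) : ℕ :=
  ((Finset.univ : Finset (Fin N)).filter fun i => c i = Sum.inr ()).card

/-- The predicted numbers `x_a` of agents that trap `a` receives from trap `a+1`
during an execution without arrivals (Lemma `unique`): `xrec m β γ j = x_{3m-j}`,
with `x_{3m} = 0`, and for `a = 3m - j`, `y_a = x_a + γ_a`,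
`x_{a-1} = ⌊y_a/2⌋` if `β_a + ⌊y_a/2⌋ ≤ m`, and `x_{a-1} = β_a + y_a - m - 1`
otherwise. In particular `xrec m β γ (3m) = x₀ = s(C_l)` is the number of agents
released by the line. -/
def xrec (m : ℕ) (β γ : ℕ → ℕ) : ℕ → ℕ
  | 0 => 0
  | j + 1 =>
    let a := 3 * m - j
    let y := xrec m β γ j + γ a
    if β a + y / 2 ≤ m then y / 2 else β a + y - (m + 1)

/-- `y_a = x_a + γ_a`: the total number of agents visiting the gate of trap `a`. -/
def yval (m : ℕ) (β γ : ℕ → ℕ) (a : ℕ) : ℕ := xrec m β γ (3 * m - a) + γ a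

/-- Predicted number of agents in the inner states of trap `a` in the silent
configuration `C̄_l`. -/
def betaBar (m : ℕ) (β γ : ℕ → ℕ) (a : ℕ) : ℕ :=
  if β a + yval m β γ a / 2 ≤ m then β a + yval m β γ a / 2 else m

/-- Predicted number of agents in the gate state of trap `a` in the silent
configuration `C̄_l`. -/
def gammaBar (m : ℕ) (β γ : ℕ → ℕ) (a : ℕ) : ℕ :=
  if β a + yval m β γ a / 2 ≤ m then yval m β γ a % 2 else 1

/-- The surplus `s(C_l)`: the number of agents released by the line before reaching
the silent configuration, when no agents arrive at the entrance gate. -/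
def sOfLine (m : ℕ) (β γ : ℕ → ℕ) : ℕ := xrec m β γ (3 * m)

/-- A configuration of a line of traps is tidy if, within each trap, every
overloaded inner state (occupied by at least two agents) has a higher index
than every gap (unoccupied inner state) of that trap. -/
def TidyLine {m N : ℕ} (c : Fin N → LineSt m) : Prop :=
  ∀ (a : Fin (3 * m)) (b b' : Fin (m + 1)), (b : ℕ) ≠ 0 → (b' : ℕ) ≠ 0 →
    2 ≤ ((Finset.univ : Finset (Fin N)).filter fun i => c i = Sum.inl (a, b)).card →
    ((Finset.univ : Finset (Fin N)).filter fun i => c i = Sum.inl (a, b')).card = 0 →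
    (b' : ℕ) < (b : ℕ)

/-- `ρ_a(C_l)`, the excess of trap `a` (the number of tokens of trap `a`). -/
noncomputable def rhoOf {m N : ℕ} (c : Fin N → LineSt m) (a : ℕ) : ℕ :=
  if 1 ≤ a ∧ a ≤ 3 * m then
    if betaOf c a + gammaOf c a / 2 ≤ m then gammaOf c a / 2
    else betaOf c a + gammaOf c a - (m + 1)
  else 0

/-- `r(C_l)`, the total number of tokens in the line. -/
noncomputable def rOfLine {m N : ℕ} (c : Fin N → LineSt m) : ℕ :=
  ∑ a ∈ Finset.Icc 1 (3 * m), rhoOf c a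

/-- `α_a(C)` (allocation vector entry). -/
noncomputable def alphaOf {m N : ℕ} (c : Fin N → LineSt m) (a : ℕ) : ℕ :=
  min (betaOf c a + gammaOf c a / 2) m

/-- `δ_a(C)` (target gate vector entry). -/
noncomputable def deltaOf {m N : ℕ} (c : Fin N → LineSt m) (a : ℕ) : ℕ :=
  if betaOf c a + gammaOf c a / 2 ≤ m then gammaOf c a % 2 else 1

/-- A configuration is silent if no interaction can change it. -/
def LineSilent {m N : ℕ} (c : Fin N → LineSt m) : Prop :=
  ∀ p : SchedPair N, pstep (lineDelta m) c p = c


/-!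
The prediction made from a configuration (the vectors `betaBar`, `gammaBar` computed from its `β`
and `γ`, and its number of agents in `X` plus `s`) is invariant under every interaction from a tidy
configuration, and tidiness is invariant too.
Moves between inner states change no trap profile. A gate interaction in trap `a` sends one agent
to the top of trap `a` and one to the gate of trap `a - 1` (or to `X`): the outflow of trap `a`
drops by one, which the extra gate agent below exactly compensates. An agent dropping from inner
state `1` to the gate can only do so in a full trap (this is where tidiness is needed), and the
outcome of a full trap does not distinguish inner from gate agents. In a silent configuration every
state holds at most one agent, so nothing flows and the prediction is the configuration itself.
Silence is reached because the weight `(m + 2) * a + b` of the occupied states strictly decreases.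
-/

section Schedule

variable {S : Type} {n : ℕ} (δ : S → S → S × S)

lemma pstep_apply_fst (c : Fin n → S) (p : SchedPair n) :
    pstep δ c p p.1.1 = (δ (c p.1.1) (c p.1.2)).1 := by
  simp [pstep]

lemma pstep_apply_snd (c : Fin n → S) (p : SchedPair n) :
    pstep δ c p p.1.2 = (δ (c p.1.1) (c p.1.2)).2 := by
  simp [pstep, p.2.symm]

lemma pstep_apply_of_ne (c : Fin n → S) (p : SchedPair n) {k : Fin n}
    (h₁ : k ≠ p.1.1) (h₂ : k ≠ p.1.2) : pstep δ c p k = c k := by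
  simp [pstep, h₁, h₂]

lemma pstep_eq_self (c : Fin n → S) (p : SchedPair n)
    (h : δ (c p.1.1) (c p.1.2) = (c p.1.1, c p.1.2)) : pstep δ c p = c := by
  funext k
  unfold pstep
  split_ifs with h₁ h₂
  · rw [h, h₁]
  · rw [h, h₂]
  · rfl

lemma sum_pstep_add {M : Type*} [AddCommMonoid M] (f : S → M) (c : Fin n → S)
    (p : SchedPair n) :
    ∑ k, f (pstep δ c p k) + (f (c p.1.1) + f (c p.1.2)) =
      ∑ k, f (c k) + (f (pstep δ c p p.1.1) + f (pstep δ c p p.1.2)) := by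
  have hj : p.1.2 ∈ univ.erase p.1.1 := mem_erase.2 ⟨p.2.symm, mem_univ _⟩
  have hrest : ∑ k ∈ (univ.erase p.1.1).erase p.1.2, f (pstep δ c p k) =
      ∑ k ∈ (univ.erase p.1.1).erase p.1.2, f (c k) :=
    sum_congr rfl fun k hk => by
      rw [pstep_apply_of_ne δ c p (ne_of_mem_erase (mem_of_mem_erase hk)) (ne_of_mem_erase hk)]
  rw [← add_sum_erase _ _ (mem_univ p.1.1), ← add_sum_erase _ _ hj, hrest,
    ← add_sum_erase _ (fun k => f (c k)) (mem_univ p.1.1), ← add_sum_erase _ _ hj]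
  abel

noncomputable def agentCount (c : Fin n → S) (P : S → Prop) : ℕ := #{k | P (c k)}

lemma agentCount_pstep_add (c : Fin n → S) (p : SchedPair n) {s : S}
    (h₁ : c p.1.1 = s) (h₂ : c p.1.2 = s) (P : S → Prop) :
    agentCount (pstep δ c p) P + ((if P s then 1 else 0) + (if P s then 1 else 0)) =
      agentCount c P +
        ((if P (δ s s).1 then 1 else 0) + (if P (δ s s).2 then 1 else 0)) := by
  have h := sum_pstep_add δ (fun s => if P s then 1 else 0) c p
  rw [pstep_apply_fst, pstep_apply_snd, h₁, h₂] at h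
  simpa only [agentCount, card_filter] using h

lemma two_le_agentCount {c : Fin n → S} {i j : Fin n} {s : S} (hi : c i = s) (hj : c j = s)
    (hij : i ≠ j) : 2 ≤ agentCount c (· = s) :=
  one_lt_card.2 ⟨i, by simpa using hi, j, by simpa using hj, hij⟩

lemma ptraj_cons (c : Fin n → S) (p : SchedPair n) (σ : ℕ → SchedPair n) (T : ℕ) :
    ptraj δ c (Stream'.cons p σ) (T + 1) = ptraj δ (pstep δ c p) σ T := by
  induction T with
  | zero => rfl
  | succ T ih => exact congrArg (pstep δ · (σ T)) ih

lemma exists_silent_of_measure [Nonempty (SchedPair n)] (μ : (Fin n → S) → ℕ)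
    (hμ : ∀ c p, pstep δ c p ≠ c → μ (pstep δ c p) < μ c) (c : Fin n → S) :
    ∃ (σ : ℕ → SchedPair n) (T : ℕ), ∀ p, pstep δ (ptraj δ c σ T) p = ptraj δ c σ T := by
  induction hc : μ c using Nat.strong_induction_on generalizing c with
  | _ k ih =>
    by_cases hsilent : ∀ p, pstep δ c p = c
    · exact ⟨fun _ => Classical.arbitrary _, 0, hsilent⟩
    · obtain ⟨p, hp⟩ := not_forall.1 hsilent
      obtain ⟨σ, T, hT⟩ := ih _ (hc ▸ hμ c p hp) (pstep δ c p) rfl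
      exact ⟨Stream'.cons p σ, T + 1, by rwa [ptraj_cons]⟩

end Schedule

section LineStep

variable {m N : ℕ}

lemma lineDelta_inner (q : Fin (3 * m) × Fin (m + 1)) (h : (q.2 : ℕ) ≠ 0) :
    lineDelta m (Sum.inl q) (Sum.inl q) = (Sum.inl q, Sum.inl (q.1, q.2 - 1)) := by
  simp [lineDelta, h]

lemma lineDelta_gate (q : Fin (3 * m) × Fin (m + 1)) (h₀ : (q.2 : ℕ) = 0) (h₁ : (q.1 : ℕ) ≠ 0) :
    lineDelta m (Sum.inl q) (Sum.inl q) =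
      (Sum.inl (q.1, Fin.last m), Sum.inl (⟨(q.1 : ℕ) - 1, by omega⟩, 0)) := by
  simp [lineDelta, h₀, h₁]

lemma lineDelta_exit (q : Fin (3 * m) × Fin (m + 1)) (h₀ : (q.2 : ℕ) = 0) (h₁ : (q.1 : ℕ) = 0) :
    lineDelta m (Sum.inl q) (Sum.inl q) = (Sum.inl (q.1, Fin.last m), Sum.inr ()) := by
  simp [lineDelta, h₀, h₁]

lemma pstep_lineDelta_eq_self_or (c : Fin N → LineSt m) (p : SchedPair N) :
    pstep (lineDelta m) c p = c ∨
      ∃ q, c p.1.1 = Sum.inl q ∧ c p.1.2 = Sum.inl q := by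
  by_cases h : ∃ q, c p.1.1 = Sum.inl q ∧ c p.1.2 = Sum.inl q
  · exact Or.inr h
  · refine Or.inl (pstep_eq_self _ c p ?_)
    rcases h₁ : c p.1.1 with q₁ | _ <;> rcases h₂ : c p.1.2 with q₂ | _ <;>
      simp only [lineDelta, ite_eq_right_iff]
    rintro rfl
    exact absurd ⟨q₁, h₁, h₂⟩ h

def InInner (a : ℕ) (s : LineSt m) : Prop :=
  ∃ p : Fin (3 * m) × Fin (m + 1), s = Sum.inl p ∧ (p.1 : ℕ) = a - 1 ∧ 1 ≤ a ∧ (p.2 : ℕ) ≠ 0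

def AtGate (a : ℕ) (s : LineSt m) : Prop :=
  ∃ p : Fin (3 * m) × Fin (m + 1), s = Sum.inl p ∧ (p.1 : ℕ) = a - 1 ∧ 1 ≤ a ∧ (p.2 : ℕ) = 0

lemma betaOf_eq_agentCount (c : Fin N → LineSt m) (a : ℕ) :
    betaOf c a = agentCount c (InInner a) := by
  unfold betaOf agentCount InInner; congr

lemma gammaOf_eq_agentCount (c : Fin N → LineSt m) (a : ℕ) :
    gammaOf c a = agentCount c (AtGate a) := by
  unfold gammaOf agentCount AtGate; congr

lemma xCount_eq_agentCount (c : Fin N → LineSt m) :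
    xCount c = agentCount c (· = Sum.inr ()) := by
  unfold xCount agentCount; congr

@[simp] lemma inInner_inl (a : ℕ) (q : Fin (3 * m) × Fin (m + 1)) :
    InInner a (Sum.inl q) ↔ a = q.1 + 1 ∧ (q.2 : ℕ) ≠ 0 := by
  simp only [InInner, Sum.inl.injEq, exists_eq_left']
  omega

@[simp] lemma atGate_inl (a : ℕ) (q : Fin (3 * m) × Fin (m + 1)) :
    AtGate a (Sum.inl q) ↔ a = q.1 + 1 ∧ (q.2 : ℕ) = 0 := by
  simp only [AtGate, Sum.inl.injEq, exists_eq_left']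
  omega

@[simp] lemma not_inInner_inr (a : ℕ) (u : Unit) : ¬ InInner a (Sum.inr u : LineSt m) := by
  simp [InInner]

@[simp] lemma not_atGate_inr (a : ℕ) (u : Unit) : ¬ AtGate a (Sum.inr u : LineSt m) := by
  simp [AtGate]

section Effective

variable {c : Fin N → LineSt m} {p : SchedPair N} {q : Fin (3 * m) × Fin (m + 1)}

lemma profile_pstep_inner (h₁ : c p.1.1 = Sum.inl q) (h₂ : c p.1.2 = Sum.inl q)
    (hq : (q.2 : ℕ) ≠ 0) :
    (∀ a, betaOf (pstep (lineDelta m) c p) a + (if a = q.1 + 1 ∧ (q.2 : ℕ) = 1 then 1 else 0) =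
      betaOf c a) ∧
    (∀ a, gammaOf (pstep (lineDelta m) c p) a =
      gammaOf c a + (if a = q.1 + 1 ∧ (q.2 : ℕ) = 1 then 1 else 0)) ∧
    xCount (pstep (lineDelta m) c p) = xCount c := by
  have key := agentCount_pstep_add (lineDelta m) c p h₁ h₂
  simp only [lineDelta_inner q hq] at key
  have hsub := Fin.val_sub_one_of_ne_zero (Fin.val_ne_zero_iff.1 hq)
  refine ⟨fun a => ?_, fun a => ?_, ?_⟩
  · have h := key (InInner a)
    simp only [inInner_inl, hsub] at h
    rw [betaOf_eq_agentCount, betaOf_eq_agentCount]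
    split_ifs at h ⊢ <;> omega
  · have h := key (AtGate a)
    simp only [atGate_inl, hsub] at h
    rw [gammaOf_eq_agentCount, gammaOf_eq_agentCount]
    split_ifs at h ⊢ <;> omega
  · simpa [xCount_eq_agentCount] using key (· = Sum.inr ())

lemma profile_pstep_gate (h₁ : c p.1.1 = Sum.inl q) (h₂ : c p.1.2 = Sum.inl q)
    (hq : (q.2 : ℕ) = 0) :
    (∀ a, betaOf (pstep (lineDelta m) c p) a = betaOf c a + (if a = q.1 + 1 then 1 else 0)) ∧
    (∀ a, 1 ≤ a → gammaOf (pstep (lineDelta m) c p) a + (if a = q.1 + 1 then 2 else 0) =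
      gammaOf c a + (if a + 1 = q.1 + 1 then 1 else 0)) ∧
    xCount (pstep (lineDelta m) c p) = xCount c + (if (q.1 : ℕ) = 0 then 1 else 0) := by
  have key := agentCount_pstep_add (lineDelta m) c p h₁ h₂
  have hm : m ≠ 0 := by have := q.1.isLt; omega
  by_cases hq₁ : (q.1 : ℕ) = 0
  · simp only [lineDelta_exit q hq hq₁] at key
    refine ⟨fun a => ?_, fun a ha => ?_, ?_⟩
    · have h := key (InInner a)
      simp only [inInner_inl, not_inInner_inr, Fin.val_last, hq, if_false] at h
      rw [betaOf_eq_agentCount, betaOf_eq_agentCount]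
      split_ifs at h ⊢ <;> omega
    · have h := key (AtGate a)
      simp only [atGate_inl, not_atGate_inr, Fin.val_last, hq, hm, and_false, and_true,
        if_false] at h
      rw [gammaOf_eq_agentCount, gammaOf_eq_agentCount]
      split_ifs at h ⊢ <;> omega
    · simpa [xCount_eq_agentCount, hq₁] using key (· = Sum.inr ())
  · simp only [lineDelta_gate q hq hq₁] at key
    refine ⟨fun a => ?_, fun a ha => ?_, ?_⟩
    · have h := key (InInner a)
      simp only [inInner_inl, Fin.val_last, Fin.val_zero, hq] at h
      rw [betaOf_eq_agentCount, betaOf_eq_agentCount]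
      split_ifs at h ⊢ <;> omega
    · have h := key (AtGate a)
      simp only [atGate_inl, Fin.val_last, Fin.val_zero, hq, hm, and_false, and_true,
        if_false] at h
      rw [gammaOf_eq_agentCount, gammaOf_eq_agentCount]
      split_ifs at h ⊢ <;> omega
    · simpa [xCount_eq_agentCount, hq₁] using key (· = Sum.inr ())

end Effective

end LineStep

section Prediction

/-- The silent outcome of a single trap holding `β` inner agents that receives `y` agents at its
gate in total: its inner agents, its gate agents (`trapGamma`) and the agents it passes on
(`trapOut`). `betaBar`, `gammaBar` and `xrec` are these at `y = yval`. -/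
def trapBeta (m β y : ℕ) : ℕ := if β + y / 2 ≤ m then β + y / 2 else m

def trapGamma (m β y : ℕ) : ℕ := if β + y / 2 ≤ m then y % 2 else 1

def trapOut (m β y : ℕ) : ℕ := if β + y / 2 ≤ m then y / 2 else β + y - (m + 1)

lemma trap_fill {m β : ℕ} (y : ℕ) (h : m ≤ β) :
    trapBeta m (β + 1) y = trapBeta m β (y + 1) ∧ trapGamma m (β + 1) y = trapGamma m β (y + 1) ∧
      trapOut m (β + 1) y = trapOut m β (y + 1) := by
  unfold trapBeta trapGamma trapOut
  refine ⟨?_, ?_, ?_⟩ <;> split_ifs <;> omega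

lemma trap_gate (m β y : ℕ) :
    trapBeta m β (y + 2) = trapBeta m (β + 1) y ∧ trapGamma m β (y + 2) = trapGamma m (β + 1) y ∧
      trapOut m β (y + 2) = trapOut m (β + 1) y + 1 := by
  unfold trapBeta trapGamma trapOut
  refine ⟨?_, ?_, ?_⟩ <;> split_ifs <;> omega

variable {m : ℕ} {β γ β' γ' : ℕ → ℕ}

lemma xrec_succ (j : ℕ) :
    xrec m β γ (j + 1) = trapOut m (β (3 * m - j)) (xrec m β γ j + γ (3 * m - j)) := rfl

lemma betaBar_eq_trapBeta (a : ℕ) :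
    betaBar m β γ a = trapBeta m (β a) (xrec m β γ (3 * m - a) + γ a) := rfl

lemma gammaBar_eq_trapGamma (a : ℕ) :
    gammaBar m β γ a = trapGamma m (β a) (xrec m β γ (3 * m - a) + γ a) := rfl

lemma xrec_congr_above {A : ℕ} (h : ∀ a, A < a → a ≤ 3 * m → β a = β' a ∧ γ a = γ' a)
    {j : ℕ} (hj : j ≤ 3 * m - A) : xrec m β γ j = xrec m β' γ' j := by
  induction j with
  | zero => rfl
  | succ j ih =>
    obtain ⟨hβ, hγ⟩ := h (3 * m - j) (by omega) (by omega)
    rw [xrec_succ, xrec_succ, ih (by omega), hβ, hγ]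

lemma xrec_congr_below {j₀ : ℕ} (hj₀ : xrec m β γ j₀ = xrec m β' γ' j₀)
    (h : ∀ a, 1 ≤ a → a ≤ 3 * m - j₀ → β a = β' a ∧ γ a = γ' a)
    {j : ℕ} (hj : j₀ ≤ j) (hj' : j ≤ 3 * m) : xrec m β γ j = xrec m β' γ' j := by
  induction j, hj using Nat.le_induction with
  | base => exact hj₀
  | succ j hj ih =>
    obtain ⟨hβ, hγ⟩ := h (3 * m - j) (by omega) (by omega)
    rw [xrec_succ, xrec_succ, ih (by omega), hβ, hγ]

/-- `χ` and `χ'` are the numbers of agents already released to `X`. -/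
def SamePrediction (m : ℕ) (β γ : ℕ → ℕ) (χ : ℕ) (β' γ' : ℕ → ℕ) (χ' : ℕ) : Prop :=
  (∀ a, 1 ≤ a → a ≤ 3 * m →
    betaBar m β γ a = betaBar m β' γ' a ∧ gammaBar m β γ a = gammaBar m β' γ' a) ∧
  χ + sOfLine m β γ = χ' + sOfLine m β' γ'

lemma SamePrediction.refl (m : ℕ) (β γ : ℕ → ℕ) (χ : ℕ) : SamePrediction m β γ χ β γ χ :=
  ⟨fun _ _ _ => ⟨rfl, rfl⟩, rfl⟩

lemma SamePrediction.trans {β'' γ'' : ℕ → ℕ} {χ χ' χ'' : ℕ}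
    (h : SamePrediction m β γ χ β' γ' χ') (h' : SamePrediction m β' γ' χ' β'' γ'' χ'') :
    SamePrediction m β γ χ β'' γ'' χ'' :=
  ⟨fun a ha ha' => ⟨(h.1 a ha ha').1.trans (h'.1 a ha ha').1,
    (h.1 a ha ha').2.trans (h'.1 a ha ha').2⟩, h.2.trans h'.2⟩

/-- A change confined to trap `A` that keeps its silent outcome and shifts its output by `d`,
compensated by `d` more agents at the gate of trap `A - 1` (or in `X` when `A = 1`), does not
change the prediction. -/
lemma samePrediction_of_local {χ χ' A d : ℕ} (hA : 1 ≤ A) (hA' : A ≤ 3 * m)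
    (hlocal : ∀ x, trapBeta m (β A) (x + γ A) = trapBeta m (β' A) (x + γ' A) ∧
      trapGamma m (β A) (x + γ A) = trapGamma m (β' A) (x + γ' A) ∧
      trapOut m (β A) (x + γ A) = trapOut m (β' A) (x + γ' A) + d)
    (hprev : 2 ≤ A → β (A - 1) = β' (A - 1) ∧ γ (A - 1) + d = γ' (A - 1))
    (hχ : χ + (if A = 1 then d else 0) = χ')
    (hoff : ∀ a, 1 ≤ a → a ≠ A → a ≠ A - 1 → β a = β' a ∧ γ a = γ' a) :
    SamePrediction m β γ χ β' γ' χ' := by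
  have hidx : 3 * m - (3 * m - A) = A := by omega
  have habove : ∀ j ≤ 3 * m - A, xrec m β γ j = xrec m β' γ' j := fun j hj =>
    xrec_congr_above (fun a ha _ => hoff a (by omega) (by omega) (by omega)) hj
  have hat : xrec m β γ (3 * m - A + 1) = xrec m β' γ' (3 * m - A + 1) + d := by
    rw [xrec_succ, xrec_succ, hidx, habove _ le_rfl]
    exact (hlocal _).2.2
  have hbelow : 2 ≤ A → ∀ j, 3 * m - A + 2 ≤ j → j ≤ 3 * m → xrec m β γ j = xrec m β' γ' j := by
    intro h2 j hj hj'
    refine xrec_congr_below ?_ (fun a ha ha' => hoff a ha (by omega) (by omega)) hj hj'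
    have hidx' : 3 * m - (3 * m - A + 1) = A - 1 := by omega
    show xrec m β γ (3 * m - A + 1 + 1) = xrec m β' γ' (3 * m - A + 1 + 1)
    rw [xrec_succ, xrec_succ (β := β'), hidx', hat, (hprev h2).1, ← (hprev h2).2, add_right_comm,
      add_assoc]
  refine ⟨fun a ha ha' => ?_, ?_⟩
  · rw [betaBar_eq_trapBeta, betaBar_eq_trapBeta, gammaBar_eq_trapGamma, gammaBar_eq_trapGamma]
    rcases lt_trichotomy a A with hlt | rfl | hgt
    · rcases eq_or_ne a (A - 1) with rfl | hne
      · have hxa : 3 * m - (A - 1) = 3 * m - A + 1 := by omega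
        rw [hxa, hat, (hprev (by omega)).1, add_right_comm, add_assoc, (hprev (by omega)).2]
        exact ⟨rfl, rfl⟩
      · rw [hbelow (by omega) _ (by omega) (by omega), (hoff a ha (by omega) hne).1,
          (hoff a ha (by omega) hne).2]
        exact ⟨rfl, rfl⟩
    · rw [habove _ le_rfl]
      exact ⟨(hlocal _).1, (hlocal _).2.1⟩
    · rw [habove _ (by omega), (hoff a ha (by omega) (by omega)).1,
        (hoff a ha (by omega) (by omega)).2]
      exact ⟨rfl, rfl⟩
  · unfold sOfLine
    split_ifs at hχ with h1
    · subst h1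
      have h3m : 3 * m = 3 * m - 1 + 1 := by omega
      rw [h3m, hat, ← hχ]
      ring
    · rw [hbelow (by omega) _ (by omega) le_rfl, ← hχ, add_zero]

end Prediction

section Tidy

variable {m N : ℕ}

def TrapTidy (κ : Fin (m + 1) → ℕ) : Prop :=
  ∀ b b' : Fin (m + 1), (b : ℕ) ≠ 0 → (b' : ℕ) ≠ 0 → 2 ≤ κ b → κ b' = 0 → (b' : ℕ) < b

lemma tidyLine_iff (c : Fin N → LineSt m) :
    TidyLine c ↔ ∀ a, TrapTidy fun b => agentCount c (· = Sum.inl (a, b)) := by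
  have h : ∀ s : LineSt m, agentCount c (· = s) = #{i | c i = s} := fun s => by
    unfold agentCount; congr
  simp only [TidyLine, TrapTidy, h]

lemma TrapTidy.of_le_of_eq_off_last {κ κ' : Fin (m + 1) → ℕ} (h : TrapTidy κ)
    (hle : ∀ b : Fin (m + 1), (b : ℕ) ≠ 0 → κ b ≤ κ' b)
    (heq : ∀ b : Fin (m + 1), (b : ℕ) ≠ 0 → b ≠ Fin.last m → κ' b = κ b) : TrapTidy κ' := by
  intro b b' hb hb' h2 h0
  by_cases hlast : b = Fin.last m
  · have hne : (b' : ℕ) ≠ b := fun h' => by rw [Fin.ext h'] at h0; omega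
    have := b'.is_le
    rw [hlast, Fin.val_last] at hne ⊢
    omega
  · exact h b b' hb hb' (heq b hb hlast ▸ h2) (Nat.eq_zero_of_le_zero (h0 ▸ hle b' hb'))

lemma TrapTidy.of_shift {κ κ' : Fin (m + 1) → ℕ} (h : TrapTidy κ) {b₀ b₁ : Fin (m + 1)}
    (hb : (b₁ : ℕ) + 1 = b₀) (h2 : 2 ≤ κ b₀) (h₀ : κ' b₀ + 1 = κ b₀) (h₁ : κ' b₁ = κ b₁ + 1)
    (hoff : ∀ b, b ≠ b₀ → b ≠ b₁ → κ' b = κ b) : TrapTidy κ' := by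
  intro b b' hb₀ hb' h2' h0
  have hne₀ : b' ≠ b₀ := by rintro rfl; omega
  have hne₁ : b' ≠ b₁ := by rintro rfl; omega
  have h0' : κ b' = 0 := hoff b' hne₀ hne₁ ▸ h0
  by_cases hb₁ : b = b₁
  · have := h b₀ b' (by omega) hb' h2 h0'
    have : (b' : ℕ) ≠ b₁ := fun h' => hne₁ (Fin.ext h')
    subst hb₁
    omega
  · have hκ : 2 ≤ κ b := by
      by_cases hb₀' : b = b₀
      · exact hb₀' ▸ h2
      · exact hoff b hb₀' hb₁ ▸ h2'
    exact h b b' hb₀ hb' hκ h0'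

lemma TrapTidy.add_le_sum {κ : Fin (m + 1) → ℕ} (h : TrapTidy κ) {b₁ : Fin (m + 1)}
    (hb₁ : (b₁ : ℕ) = 1) (h2 : 2 ≤ κ b₁) : m + 1 ≤ ∑ b ∈ univ.erase 0, κ b := by
  have hpos : ∀ b ∈ univ.erase (0 : Fin (m + 1)), 1 + (if b₁ = b then 1 else 0) ≤ κ b := by
    intro b hb
    have hb0 : (b : ℕ) ≠ 0 := Fin.val_ne_zero_iff.2 (ne_of_mem_erase hb)
    split_ifs with hb'
    · exact hb' ▸ h2
    · by_contra hlt
      have := h b₁ b (by omega) hb0 h2 (by omega)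
      omega
  have hb₁mem : b₁ ∈ univ.erase (0 : Fin (m + 1)) :=
    mem_erase.2 ⟨Fin.val_ne_zero_iff.1 (by omega), mem_univ _⟩
  calc m + 1 = ∑ b ∈ univ.erase (0 : Fin (m + 1)), (1 + if b₁ = b then 1 else 0) := by
        rw [sum_add_distrib, sum_ite_eq, if_pos hb₁mem, sum_const, card_erase_of_mem (mem_univ _),
          card_univ, Fintype.card_fin, smul_eq_mul, mul_one, Nat.add_sub_cancel]
    _ ≤ ∑ b ∈ univ.erase 0, κ b := sum_le_sum hpos

lemma betaOf_eq_sum (c : Fin N → LineSt m) (A : Fin (3 * m)) :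
    betaOf c (A + 1) = ∑ b ∈ univ.erase 0, agentCount c (· = Sum.inl (A, b)) := by
  simp only [betaOf_eq_agentCount, agentCount, card_filter]
  rw [sum_comm]
  refine sum_congr rfl fun k _ => ?_
  rcases c k with ⟨A', b'⟩ | u
  · by_cases hA : A' = A
    · subst hA
      simp
    · simp [hA, Fin.val_inj, Ne.symm hA]
  · simp

end Tidy

section Step

variable {m N : ℕ} {c : Fin N → LineSt m} {p : SchedPair N} {q : Fin (3 * m) × Fin (m + 1)}

lemma agentCount_state_pstep_inner (h₁ : c p.1.1 = Sum.inl q) (h₂ : c p.1.2 = Sum.inl q)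
    (hq : (q.2 : ℕ) ≠ 0) (A : Fin (3 * m)) (b : Fin (m + 1)) :
    agentCount (pstep (lineDelta m) c p) (· = Sum.inl (A, b)) + (if q = (A, b) then 1 else 0) =
      agentCount c (· = Sum.inl (A, b)) + (if (q.1, q.2 - 1) = (A, b) then 1 else 0) := by
  have h := agentCount_pstep_add (lineDelta m) c p h₁ h₂ (· = Sum.inl (A, b))
  simp only [lineDelta_inner q hq, Sum.inl.injEq] at h
  split_ifs at h ⊢ <;> omega

lemma agentCount_state_pstep_gate (h₁ : c p.1.1 = Sum.inl q) (h₂ : c p.1.2 = Sum.inl q)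
    (hq : (q.2 : ℕ) = 0) (A : Fin (3 * m)) {b : Fin (m + 1)} (hb : (b : ℕ) ≠ 0) :
    agentCount (pstep (lineDelta m) c p) (· = Sum.inl (A, b)) =
      agentCount c (· = Sum.inl (A, b)) + (if q.1 = A ∧ Fin.last m = b then 1 else 0) := by
  have h := agentCount_pstep_add (lineDelta m) c p h₁ h₂ (· = Sum.inl (A, b))
  have hqb : q.2 ≠ b := fun h' => hb (h' ▸ hq)
  by_cases hq₁ : (q.1 : ℕ) = 0
  · simp only [lineDelta_exit q hq hq₁, Sum.inl.injEq, reduceCtorEq, if_false] at h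
    rw [← Prod.mk.eta (p := q)] at h
    simp only [Prod.mk.injEq, hqb, and_false, if_false] at h
    omega
  · have hb0 : (0 : Fin (m + 1)) ≠ b := fun h' => hb (by simp [← h'])
    simp only [lineDelta_gate q hq hq₁, Sum.inl.injEq, Prod.mk.injEq, hb0, and_false,
      if_false] at h
    rw [← Prod.mk.eta (p := q)] at h
    simp only [Prod.mk.injEq, hqb, and_false, if_false] at h
    omega

lemma tidyLine_pstep (ht : TidyLine c) : TidyLine (pstep (lineDelta m) c p) := by
  rcases pstep_lineDelta_eq_self_or c p with heq | ⟨q, h₁, h₂⟩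
  · rwa [heq]
  rw [tidyLine_iff] at ht ⊢
  intro A
  by_cases hq : (q.2 : ℕ) = 0
  · refine (ht A).of_le_of_eq_off_last (fun b hb => ?_) (fun b hb hlast => ?_) <;>
      rw [agentCount_state_pstep_gate h₁ h₂ hq A hb]
    · omega
    · rw [if_neg (fun h => hlast h.2.symm), add_zero]
  · have hκ := agentCount_state_pstep_inner h₁ h₂ hq A
    by_cases hA : q.1 = A
    · subst hA
      have hsub := Fin.val_sub_one_of_ne_zero (Fin.val_ne_zero_iff.1 hq)
      have hne : q.2 - 1 ≠ q.2 := fun h => by rw [← Fin.val_inj, hsub] at h; omega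
      refine (ht q.1).of_shift (b₀ := q.2) (b₁ := q.2 - 1) (by omega)
        (two_le_agentCount h₁ h₂ p.2) ?_ ?_ (fun b hb₀ hb₁ => ?_)
      · simpa [Prod.ext_iff, hne] using hκ q.2
      · simpa [Prod.ext_iff, hne.symm] using hκ (q.2 - 1)
      · simpa [Prod.ext_iff, Ne.symm hb₀, Ne.symm hb₁] using hκ b
    · convert ht A using 2 with b
      simpa [Prod.ext_iff, hA] using hκ b

lemma betaOf_ge_of_tidy (ht : TidyLine c) (h₁ : c p.1.1 = Sum.inl q) (h₂ : c p.1.2 = Sum.inl q)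
    (hq : (q.2 : ℕ) = 1) : m + 1 ≤ betaOf c (q.1 + 1) := by
  rw [betaOf_eq_sum]
  exact ((tidyLine_iff c).1 ht q.1).add_le_sum hq (two_le_agentCount h₁ h₂ p.2)

end Step

section Silent

variable {m N : ℕ}

lemma lineDelta_self_ne (q : Fin (3 * m) × Fin (m + 1)) :
    lineDelta m (Sum.inl q) (Sum.inl q) ≠ (Sum.inl q, Sum.inl q) := by
  have hm : m ≠ 0 := by have := q.1.isLt; omega
  by_cases hq : (q.2 : ℕ) = 0
  · by_cases hq₁ : (q.1 : ℕ) = 0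
    · simp [lineDelta_exit q hq hq₁]
    · rw [lineDelta_gate q hq hq₁]
      simp [Prod.ext_iff, Fin.ext_iff, hq, hm]
  · rw [lineDelta_inner q hq]
    simp [Prod.ext_iff, Fin.ext_iff, hm]

lemma agentCount_le_one_of_silent {c : Fin N → LineSt m} (hs : LineSilent c)
    (q : Fin (3 * m) × Fin (m + 1)) : agentCount c (· = Sum.inl q) ≤ 1 := by
  by_contra! h
  obtain ⟨i, hi, j, hj, hij⟩ := one_lt_card.1 h
  simp only [mem_filter, mem_univ, true_and] at hi hj
  have hfst := congrFun (hs ⟨(i, j), hij⟩) i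
  have hsnd := congrFun (hs ⟨(i, j), hij⟩) j
  rw [pstep_apply_fst, hi, hj] at hfst
  rw [pstep_apply_snd, hi, hj] at hsnd
  exact lineDelta_self_ne q (Prod.ext hfst hsnd)

lemma gammaOf_eq_agentCount_gate (c : Fin N → LineSt m) (A : Fin (3 * m)) :
    gammaOf c (A + 1) = agentCount c (· = Sum.inl (A, 0)) := by
  rw [gammaOf_eq_agentCount]
  unfold agentCount
  congr 1
  ext k
  simp only [mem_filter, mem_univ, true_and]
  rcases c k with ⟨A', b'⟩ | u
  · simp only [atGate_inl, Sum.inl.injEq, Prod.ext_iff, Fin.ext_iff, Fin.val_zero]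
    omega
  · simp

lemma betaOf_le_and_gammaOf_le_of_silent {c : Fin N → LineSt m} (hs : LineSilent c) (a : ℕ)
    (ha : 1 ≤ a) (ha' : a ≤ 3 * m) : betaOf c a ≤ m ∧ gammaOf c a ≤ 1 := by
  obtain ⟨A, rfl⟩ : ∃ A : Fin (3 * m), a = A + 1 := ⟨⟨a - 1, by omega⟩, by simp; omega⟩
  refine ⟨?_, gammaOf_eq_agentCount_gate c A ▸ agentCount_le_one_of_silent hs _⟩
  calc betaOf c (A + 1) ≤ ∑ _b ∈ univ.erase (0 : Fin (m + 1)), 1 := by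
        rw [betaOf_eq_sum]
        exact sum_le_sum fun b _ => agentCount_le_one_of_silent hs _
    _ = m := by simp [card_erase_of_mem]

variable {β γ : ℕ → ℕ}

lemma xrec_eq_zero (h : ∀ a, 1 ≤ a → a ≤ 3 * m → β a ≤ m ∧ γ a ≤ 1) {j : ℕ} (hj : j ≤ 3 * m) :
    xrec m β γ j = 0 := by
  induction j with
  | zero => rfl
  | succ j ih =>
    obtain ⟨hβ, hγ⟩ := h (3 * m - j) (by omega) (by omega)
    rw [xrec_succ, ih (by omega), trapOut, if_pos (by omega)]
    omega

lemma betaBar_eq_self_and_gammaBar_eq_self (h : ∀ a, 1 ≤ a → a ≤ 3 * m → β a ≤ m ∧ γ a ≤ 1) {a : ℕ}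
    (ha : 1 ≤ a) (ha' : a ≤ 3 * m) : betaBar m β γ a = β a ∧ gammaBar m β γ a = γ a := by
  obtain ⟨hβ, hγ⟩ := h a ha ha'
  rw [betaBar_eq_trapBeta, gammaBar_eq_trapGamma, xrec_eq_zero h (by omega), zero_add, trapBeta,
    trapGamma, if_pos (by omega), if_pos (by omega)]
  omega

end Silent

section Termination

variable {m N : ℕ}

def lineWeight : LineSt m → ℕ
  | Sum.inl q => (m + 2) * (q.1 + 1) + q.2
  | Sum.inr _ => 0

lemma lineWeight_lineDelta_lt (q : Fin (3 * m) × Fin (m + 1)) :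
    lineWeight (lineDelta m (Sum.inl q) (Sum.inl q)).1 +
        lineWeight (lineDelta m (Sum.inl q) (Sum.inl q)).2 <
      lineWeight (Sum.inl q : LineSt m) + lineWeight (Sum.inl q : LineSt m) := by
  by_cases hq : (q.2 : ℕ) = 0
  · have hlt := q.1.isLt
    by_cases hq₁ : (q.1 : ℕ) = 0
    · simp only [lineDelta_exit q hq hq₁, lineWeight, Fin.val_last, hq, hq₁]
      omega
    · simp only [lineDelta_gate q hq hq₁, lineWeight, Fin.val_last, Fin.val_zero, hq]
      have : (m + 2) * ((q.1 : ℕ) - 1 + 1) = (m + 2) * q.1 := by rw [Nat.sub_add_cancel (by omega)]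
      rw [this]
      nlinarith
  · have hsub := Fin.val_sub_one_of_ne_zero (Fin.val_ne_zero_iff.1 hq)
    simp only [lineDelta_inner q hq, lineWeight, hsub]
    omega

lemma exists_silent (hN : 2 ≤ N) (c : Fin N → LineSt m) :
    ∃ (σ : ℕ → SchedPair N) (T : ℕ), LineSilent (ptraj (lineDelta m) c σ T) := by
  have : Nonempty (SchedPair N) := ⟨⟨(⟨0, by omega⟩, ⟨1, by omega⟩), by simp⟩⟩
  refine exists_silent_of_measure (lineDelta m) (fun c => ∑ k, lineWeight (c k)) ?_ c
  intro c p hne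
  obtain ⟨q, h₁, h₂⟩ := (pstep_lineDelta_eq_self_or c p).resolve_left hne
  have h := sum_pstep_add (lineDelta m) lineWeight c p
  rw [pstep_apply_fst, pstep_apply_snd, h₁, h₂] at h
  have := lineWeight_lineDelta_lt q
  omega

end Termination

section Invariance

variable {m N : ℕ} {c : Fin N → LineSt m} {p : SchedPair N} {q : Fin (3 * m) × Fin (m + 1)}

lemma samePrediction_pstep_gate (h₁ : c p.1.1 = Sum.inl q) (h₂ : c p.1.2 = Sum.inl q)
    (hq : (q.2 : ℕ) = 0) :
    SamePrediction m (betaOf c) (gammaOf c) (xCount c) (betaOf (pstep (lineDelta m) c p))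
      (gammaOf (pstep (lineDelta m) c p)) (xCount (pstep (lineDelta m) c p)) := by
  have hA := q.1.isLt
  obtain ⟨hβ, hγ, hχ⟩ := profile_pstep_gate h₁ h₂ hq
  refine samePrediction_of_local (A := q.1 + 1) (d := 1) (by omega) (by omega)
    (fun x => ?_) (fun h2 => ?_) ?_ (fun a ha hne hne' => ?_)
  · have hγA := hγ (q.1 + 1) (by omega)
    rw [if_pos rfl, if_neg (by omega), add_zero] at hγA
    rw [hβ, if_pos rfl, ← hγA, ← add_assoc]
    exact trap_gate m _ _
  · have hγA := hγ (q.1 + 1 - 1) (by omega)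
    rw [if_neg (by omega), if_pos (by omega), add_zero] at hγA
    rw [hβ, if_neg (by omega)]
    constructor <;> omega
  · rw [hχ]
    split_ifs <;> omega
  · have hγa := hγ a ha
    rw [if_neg hne, if_neg (by omega), add_zero, add_zero] at hγa
    rw [hβ, if_neg hne, add_zero, hγa]
    exact ⟨rfl, rfl⟩

lemma samePrediction_pstep_inner (ht : TidyLine c) (h₁ : c p.1.1 = Sum.inl q)
    (h₂ : c p.1.2 = Sum.inl q) (hq : (q.2 : ℕ) ≠ 0) :
    SamePrediction m (betaOf c) (gammaOf c) (xCount c) (betaOf (pstep (lineDelta m) c p))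
      (gammaOf (pstep (lineDelta m) c p)) (xCount (pstep (lineDelta m) c p)) := by
  have hA := q.1.isLt
  obtain ⟨hβ, hγ, hχ⟩ := profile_pstep_inner h₁ h₂ hq
  by_cases hq₁ : (q.2 : ℕ) = 1
  · -- by tidiness the trap is full, where inner and gate agents are interchangeable
    have hfull := betaOf_ge_of_tidy ht h₁ h₂ hq₁
    refine samePrediction_of_local (A := q.1 + 1) (d := 0) (by omega) (by omega)
      (fun x => ?_) (fun h2 => ?_) (by simpa using hχ.symm) (fun a ha hne _ => ?_)
    · have hβA := hβ (q.1 + 1)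
      rw [if_pos ⟨rfl, hq₁⟩] at hβA
      rw [hγ, if_pos ⟨rfl, hq₁⟩, ← hβA, add_zero, ← add_assoc]
      exact trap_fill _ (by omega)
    · have hβ' := hβ (q.1 + 1 - 1)
      rw [if_neg (fun h => by omega)] at hβ'
      rw [hγ, if_neg (fun h => by omega)]
      constructor <;> omega
    · have hβ' := hβ a
      rw [if_neg (fun h => hne h.1)] at hβ'
      rw [hγ, if_neg (fun h => hne h.1)]
      constructor <;> omega
  · have hβ' : betaOf (pstep (lineDelta m) c p) = betaOf c := funext fun a => by
      simpa [hq₁] using hβ a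
    have hγ' : gammaOf (pstep (lineDelta m) c p) = gammaOf c := funext fun a => by
      simpa [hq₁] using hγ a
    rw [hβ', hγ', hχ]
    exact SamePrediction.refl _ _ _ _

lemma samePrediction_pstep (ht : TidyLine c) (p : SchedPair N) :
    SamePrediction m (betaOf c) (gammaOf c) (xCount c) (betaOf (pstep (lineDelta m) c p))
      (gammaOf (pstep (lineDelta m) c p)) (xCount (pstep (lineDelta m) c p)) := by
  rcases pstep_lineDelta_eq_self_or c p with heq | ⟨q, h₁, h₂⟩
  · rw [heq]
    exact SamePrediction.refl _ _ _ _
  by_cases hq : (q.2 : ℕ) = 0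
  · exact samePrediction_pstep_gate h₁ h₂ hq
  · exact samePrediction_pstep_inner ht h₁ h₂ hq

end Invariance

theorem line_unique_silent_configuration_general
    (m N : ℕ) (hN : 2 ≤ N)
    (c0 : Fin N → LineSt m) (htidy : TidyLine c0) :
    -- the line eventually reaches a silent configuration
    (∃ (σ : ℕ → SchedPair N) (T : ℕ), LineSilent (ptraj (lineDelta m) c0 σ T)) ∧
    -- and every silent configuration that is reached has the predicted inner vector,
    -- gate vector, and number of released agents, all depending solely on `C_l`
    ∀ (σ : ℕ → SchedPair N) (T : ℕ), LineSilent (ptraj (lineDelta m) c0 σ T) →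
      (∀ a, 1 ≤ a → a ≤ 3 * m →
        betaOf (ptraj (lineDelta m) c0 σ T) a = betaBar m (betaOf c0) (gammaOf c0) a ∧
        gammaOf (ptraj (lineDelta m) c0 σ T) a = gammaBar m (betaOf c0) (gammaOf c0) a) ∧
      xCount (ptraj (lineDelta m) c0 σ T) =
        xCount c0 + sOfLine m (betaOf c0) (gammaOf c0) := by
  refine ⟨exists_silent hN c0, fun σ T hsilent => ?_⟩
  have hinv : ∀ t, TidyLine (ptraj (lineDelta m) c0 σ t) ∧
      SamePrediction m (betaOf c0) (gammaOf c0) (xCount c0) (betaOf (ptraj (lineDelta m) c0 σ t))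
        (gammaOf (ptraj (lineDelta m) c0 σ t)) (xCount (ptraj (lineDelta m) c0 σ t)) := by
    intro t
    induction t with
    | zero => exact ⟨htidy, SamePrediction.refl _ _ _ _⟩
    | succ t ih => exact ⟨tidyLine_pstep ih.1, ih.2.trans (samePrediction_pstep ih.1 (σ t))⟩
  obtain ⟨hbars, hs⟩ := (hinv T).2
  have hbounds := betaOf_le_and_gammaOf_le_of_silent hsilent
  refine ⟨fun a ha ha' => ?_, ?_⟩
  · rw [(hbars a ha ha').1, (hbars a ha ha').2]
    exact ⟨(betaBar_eq_self_and_gammaBar_eq_self hbounds ha ha').1.symm,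
      (betaBar_eq_self_and_gammaBar_eq_self hbounds ha ha').2.symm⟩
  · rw [hs, sOfLine, xrec_eq_zero hbounds le_rfl, add_zero]

/-- Lemma `unique`: Suppose a line of traps executes from an initial
(tidy) configuration `C_l` and no agents arrive at its entrance gate during the
execution. Then the line eventually reaches a silent configuration `C̄_l`, and the
inner vector `β(C̄_l)`, the gate vector `γ(C̄_l)` and the number `s(C_l)` of agents
released by the line to state `X` before reaching `C̄_l` depend solely on `C_l` —
they are the same for every sequence of interactions chosen by the scheduler —
and are given explicitly by: with `y_a = x_a + γ_a(C_l)` and `x_{3m} = 0`,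
if `β_a(C_l) + ⌊y_a/2⌋ ≤ m` then `β_a(C̄_l) = β_a(C_l) + ⌊y_a/2⌋`,
`γ_a(C̄_l) = y_a mod 2` and `x_{a-1} = ⌊y_a/2⌋`; otherwise `β_a(C̄_l) = m`,
`γ_a(C̄_l) = 1` and `x_{a-1} = β_a(C_l) + y_a - m - 1`; and `s(C_l) = x₀`. -/
theorem line_unique_silent_configuration
    (m N : ℕ) (hm : 1 ≤ m) (hN : 2 ≤ N)
    (c0 : Fin N → LineSt m) (htidy : TidyLine c0) :
    -- the line eventually reaches a silent configuration
    (∃ (σ : ℕ → SchedPair N) (T : ℕ), LineSilent (ptraj (lineDelta m) c0 σ T)) ∧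
    -- and every silent configuration that is reached has the predicted inner vector,
    -- gate vector, and number of released agents, all depending solely on `C_l`
    ∀ (σ : ℕ → SchedPair N) (T : ℕ), LineSilent (ptraj (lineDelta m) c0 σ T) →
      (∀ a, 1 ≤ a → a ≤ 3 * m →
        betaOf (ptraj (lineDelta m) c0 σ T) a = betaBar m (betaOf c0) (gammaOf c0) a ∧
        gammaOf (ptraj (lineDelta m) c0 σ T) a = gammaBar m (betaOf c0) (gammaOf c0) a) ∧
      xCount (ptraj (lineDelta m) c0 σ T) =
        xCount c0 + sOfLine m (betaOf c0) (gammaOf c0) :=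
  line_unique_silent_configuration_general m N hN c0 htidy
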